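/- arXiv:1702.07911 — 10 statements merged into one kernel-verified Lean document; each statement's English description precedes it below -/
import Mathlib

section
/- For every x in (0, π/2), cos x − (sin x / x)^3 > −x^4/15. -/
/-!
For `x ≥ 0` the partial sums of the cosine and sine series alternately overestimate and
underestimate `cos x` and `sin x`: each bound follows from the previous one by integrating
from `0`. Hence `cos x ≥ 1 - x²/2 + x⁴/24 - x⁶/720` and `sin x / x ≤ 1 - x²/6 + x⁴/120`, and
after cubing the latter the claim becomes a polynomial inequality, true for `0 < x < 2`.
-/

open Real Finset Nat

noncomputable def cosTaylor (n : ℕ) (x : ℝ) : ℝ :=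
  ∑ k ∈ range n, (-1) ^ k * (x ^ (2 * k) / (2 * k)!)

noncomputable def sinTaylor (n : ℕ) (x : ℝ) : ℝ :=
  ∑ k ∈ range n, (-1) ^ k * (x ^ (2 * k + 1) / (2 * k + 1)!)

lemma hasDerivAt_pow_succ_div_factorial (m : ℕ) (x : ℝ) :
    HasDerivAt (fun x : ℝ => x ^ (m + 1) / (m + 1)!) (x ^ m / m !) x := by
  refine ((hasDerivAt_pow (m + 1) x).div_const ((m + 1)! : ℝ)).congr_deriv ?_
  rw [Nat.factorial_succ, Nat.cast_mul, Nat.add_sub_cancel]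
  field_simp

lemma hasDerivAt_sinTaylor (n : ℕ) (x : ℝ) : HasDerivAt (sinTaylor n) (cosTaylor n x) x :=
  HasDerivAt.fun_sum fun k _ =>
    (hasDerivAt_pow_succ_div_factorial (2 * k) x).const_mul ((-1 : ℝ) ^ k)

lemma hasDerivAt_cosTaylor_succ (n : ℕ) (x : ℝ) :
    HasDerivAt (cosTaylor (n + 1)) (-sinTaylor n x) x := by
  have hsplit : cosTaylor (n + 1) =
      fun y => 1 + ∑ k ∈ range n, (-1 : ℝ) ^ (k + 1) * (y ^ (2 * k + 2) / (2 * k + 2)!) := by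
    ext y
    simp [cosTaylor, sum_range_succ', add_comm, mul_add]
  rw [hsplit]
  refine (HasDerivAt.fun_sum fun k _ =>
    (hasDerivAt_pow_succ_div_factorial (2 * k + 1) x).const_mul ((-1 : ℝ) ^ (k + 1))).const_add 1
    |>.congr_deriv ?_
  simp [sinTaylor, pow_succ]

lemma le_of_hasDerivAt_le {f g f' g' : ℝ → ℝ} {a x : ℝ} (hf : ∀ y, HasDerivAt f (f' y) y)
    (hg : ∀ y, HasDerivAt g (g' y) y) (ha : f a ≤ g a) (hd : ∀ y, a ≤ y → f' y ≤ g' y)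
    (hx : a ≤ x) : f x ≤ g x :=
  image_le_of_deriv_right_le_deriv_boundary (fun y _ => (hf y).continuousAt.continuousWithinAt)
    (fun y _ => (hf y).hasDerivWithinAt) ha (fun y _ => (hg y).continuousAt.continuousWithinAt)
    (fun y _ => (hg y).hasDerivWithinAt) (fun y hy => hd y hy.1) ⟨hx, le_rfl⟩

lemma neg_one_pow_mul_sin_sub_sinTaylor_nonneg {n : ℕ}
    (hcos : ∀ y, 0 ≤ y → 0 ≤ (-1) ^ n * (cos y - cosTaylor n y)) {x : ℝ} (hx : 0 ≤ x) :
    0 ≤ (-1) ^ n * (sin x - sinTaylor n x) :=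
  le_of_hasDerivAt_le (g := fun y => (-1) ^ n * (sin y - sinTaylor n y))
    (fun _ => hasDerivAt_const _ 0)
    (fun y => ((hasDerivAt_sin y).sub (hasDerivAt_sinTaylor n y)).const_mul ((-1) ^ n))
    (by simp [sinTaylor]) hcos hx

lemma neg_one_pow_mul_cos_sub_cosTaylor_nonneg {n : ℕ} (hn : 1 ≤ n) {x : ℝ} (hx : 0 ≤ x) :
    0 ≤ (-1) ^ n * (cos x - cosTaylor n x) := by
  induction n, hn using Nat.le_induction generalizing x with
  | base => simpa [cosTaylor] using cos_le_one x
  | succ n _ ih =>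
    refine le_of_hasDerivAt_le (g := fun y => (-1) ^ (n + 1) * (cos y - cosTaylor (n + 1) y))
      (fun _ => hasDerivAt_const _ 0)
      (fun y => ((hasDerivAt_cos y).sub (hasDerivAt_cosTaylor_succ n y)).const_mul _)
      (by simp [cosTaylor, sum_range_succ']) (fun y hy => ?_) hx
    have := neg_one_pow_mul_sin_sub_sinTaylor_nonneg (fun _ => ih) hy
    simp only [pow_succ]
    linarith

lemma cosTaylor_four (x : ℝ) : cosTaylor 4 x = 1 - x ^ 2 / 2 + x ^ 4 / 24 - x ^ 6 / 720 := by
  norm_num [cosTaylor, sum_range_succ, Nat.factorial]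
  ring

lemma sinTaylor_three (x : ℝ) : sinTaylor 3 x = x - x ^ 3 / 6 + x ^ 5 / 120 := by
  norm_num [sinTaylor, sum_range_succ, Nat.factorial]
  ring

lemma sinTaylor_three_div_cube_lt {x : ℝ} (hx : 0 < x) (hx2 : x < 2) :
    (sinTaylor 3 x / x) ^ 3 < cosTaylor 4 x + x ^ 4 / 15 := by
  have hdiv : sinTaylor 3 x / x = 1 - x ^ 2 / 6 + x ^ 4 / 120 := by
    rw [sinTaylor_three]
    field_simp
  have hsq : x ^ 2 < 4 := by nlinarith
  -- the difference of the two sides is `x ^ 6 * q x` with this `q`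
  have hq : 0 < 5 / 432 - 13 * x ^ 2 / 14400 + x ^ 4 / 28800 - x ^ 6 / 1728000 := by
    nlinarith [mul_pos (pow_pos hx 4) (by linarith : (0 : ℝ) < 60 - x ^ 2)]
  rw [hdiv, cosTaylor_four]
  nlinarith [mul_pos (pow_pos hx 6) hq]

theorem cos_sub_sin_div_cube_gt (x : ℝ) (hx : 0 < x) (hx2 : x < Real.pi / 2) :
    Real.cos x - (Real.sin x / x) ^ 3 > -x ^ 4 / 15 := by
  have hcos : cosTaylor 4 x ≤ cos x := by
    have := neg_one_pow_mul_cos_sub_cosTaylor_nonneg (by norm_num : 1 ≤ 4) hx.le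
    norm_num at this
    exact this
  have hsin : sin x ≤ sinTaylor 3 x := by
    have := neg_one_pow_mul_sin_sub_sinTaylor_nonneg
      (fun _ => neg_one_pow_mul_cos_sub_cosTaylor_nonneg (by norm_num : 1 ≤ 3)) hx.le
    norm_num at this
    exact this
  have hcube : (sin x / x) ^ 3 ≤ (sinTaylor 3 x / x) ^ 3 :=
    (Odd.pow_le_pow (by decide)).2 (div_le_div_of_nonneg_right hsin hx.le)
  linarith [sinTaylor_three_div_cube_lt hx (by linarith [pi_lt_four])]
end

section
/- For every integer k ≥ 0 and every real x with |x| ≤ √((4k+3)(4k+4)), the Taylor polynomial T_{4k}(x) = ∑_{i=0}^{2k} (−1)^i x^{2i}/(2i)! satisfies T_{4k}(x) ≥ T_{4k+4}(x) ≥ cos x. -/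
open Finset Filter

theorem cos_taylor_upper (k : ℕ) (x : ℝ)
    (hx : |x| ≤ Real.sqrt ((4 * k + 3) * (4 * k + 4))) :
    (∑ i ∈ Finset.range (2 * k + 1), (-1 : ℝ) ^ i * x ^ (2 * i) / (Nat.factorial (2 * i))) ≥
      (∑ i ∈ Finset.range (2 * k + 3), (-1 : ℝ) ^ i * x ^ (2 * i) / (Nat.factorial (2 * i))) ∧
    (∑ i ∈ Finset.range (2 * k + 3), (-1 : ℝ) ^ i * x ^ (2 * i) / (Nat.factorial (2 * i))) ≥
      Real.cos x := by
  have hc : (0:ℝ) ≤ (4 * k + 3) * (4 * k + 4) := by positivity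
  have hx2 : x ^ 2 ≤ (4 * k + 3) * (4 * k + 4) := by
    have h1 : |x| * |x| ≤ Real.sqrt ((4 * k + 3) * (4 * k + 4)) *
        Real.sqrt ((4 * k + 3) * (4 * k + 4)) :=
      mul_self_le_mul_self (abs_nonneg x) hx
    rw [Real.mul_self_sqrt hc] at h1
    calc x ^ 2 = |x| * |x| := by rw [← sq_abs, sq]
    _ ≤ _ := h1
  -- key fact: the term sequence is antitone once (2i+1)(2i+2) ≥ (4k+3)(4k+4)
  have hterm : ∀ m : ℕ, 2 * k + 1 ≤ m →
      x ^ (2 * (m + 1)) / (Nat.factorial (2 * (m + 1))) ≤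
      x ^ (2 * m) / (Nat.factorial (2 * m)) := by
    intro m hm
    have hfac : (Nat.factorial (2 * (m + 1)) : ℝ) =
        (Nat.factorial (2 * m)) * ((2 * m + 1) * (2 * m + 2)) := by
      have : 2 * (m + 1) = (2 * m + 1) + 1 := by ring
      rw [this, Nat.factorial_succ, Nat.factorial_succ]
      push_cast; ring
    have hratio : x ^ 2 ≤ (2 * m + 1) * (2 * m + 2) := by
      calc x ^ 2 ≤ (4 * k + 3) * (4 * k + 4) := hx2
      _ ≤ ((2 * m + 1) * (2 * m + 2) : ℝ) := by
          have hm' : (2 * k + 1 : ℝ) ≤ (m : ℝ) := by exact_mod_cast hm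
          nlinarith [hm', (Nat.cast_nonneg k : (0:ℝ) ≤ k)]
    have hxe : (0:ℝ) ≤ x ^ (2 * m) := even_two_mul m |>.pow_nonneg x
    rw [hfac]
    have hfp : (0:ℝ) < Nat.factorial (2 * m) := by positivity
    have h22 : (0:ℝ) < (2 * m + 1) * (2 * m + 2) := by positivity
    rw [div_le_div_iff₀ (by positivity) hfp]
    have : x ^ (2 * (m + 1)) = x ^ (2 * m) * x ^ 2 := by ring
    rw [this]
    calc x ^ (2 * m) * x ^ 2 * (Nat.factorial (2 * m))
        ≤ x ^ (2 * m) * ((2 * m + 1) * (2 * m + 2)) * (Nat.factorial (2 * m)) := by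
          apply mul_le_mul_of_nonneg_right _ hfp.le
          exact mul_le_mul_of_nonneg_left hratio hxe
      _ = x ^ (2 * m) * ((Nat.factorial (2 * m)) * ((2 * m + 1) * (2 * m + 2))) := by ring
  constructor
  · -- T_{4k} ≥ T_{4k+4}
    rw [ge_iff_le, show 2 * k + 3 = (2 * k + 2) + 1 from rfl, Finset.sum_range_succ,
      show 2 * k + 2 = (2 * k + 1) + 1 from rfl, Finset.sum_range_succ]
    have h1 : ((-1:ℝ)) ^ (2 * k + 1) = -1 := by simp [pow_succ]
    have h2 : ((-1:ℝ)) ^ (2 * k + 2) = 1 := by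
      rw [show 2 * k + 2 = 2 * (k + 1) by ring]; simp [pow_mul]
    rw [h1, h2]
    have := hterm (2 * k + 1) le_rfl
    simp only [neg_mul, one_mul, neg_div]
    linarith
  · -- T_{4k+4} ≥ cos x
    have hs := Real.hasSum_cos x
    set f : ℕ → ℝ := fun n => (-1) ^ n * x ^ (2 * n) / (Nat.factorial (2 * n)) with hf
    have hsum : Summable f := hs.summable
    have htail : HasSum (fun j => f (j + (2 * k + 3)))
        (Real.cos x - ∑ i ∈ Finset.range (2 * k + 3), f i) :=
      ((hasSum_nat_add_iff (2 * k + 3)).mpr (by simpa using hs))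
    rw [ge_iff_le, ← sub_nonpos]
    have heq : Real.cos x - ∑ i ∈ Finset.range (2 * k + 3), f i
        = ∑' j, f (j + (2 * k + 3)) := htail.tsum_eq.symm
    rw [show Real.cos x - ∑ i ∈ Finset.range (2 * k + 3),
        (-1:ℝ) ^ i * x ^ (2 * i) / (Nat.factorial (2 * i))
        = Real.cos x - ∑ i ∈ Finset.range (2 * k + 3), f i from rfl, heq]
    -- f (j + 2k+3) = (-1)^(j+1) * b j with b antitone nonneg
    set b : ℕ → ℝ := fun j => x ^ (2 * (j + (2 * k + 3))) / (Nat.factorial (2 * (j + (2 * k + 3))))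
      with hb
    have hfb : ∀ j, f (j + (2 * k + 3)) = -((-1) ^ j * b j) := by
      intro j
      simp only [hf, hb]
      rw [pow_add, show ((-1:ℝ)) ^ (2 * k + 3) = -1 by
        rw [show 2 * k + 3 = 2 * (k + 1) + 1 by ring]; simp [pow_succ, pow_mul]]
      ring
    have hban : Antitone b := by
      apply antitone_nat_of_succ_le
      intro j
      have := hterm (j + (2 * k + 3)) (by omega)
      simpa [hb, show j + 1 + (2 * k + 3) = (j + (2 * k + 3)) + 1 by ring] using this
    have hbsum : Summable fun j => (-1:ℝ) ^ j * b j := by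
      have : Summable fun j => f (j + (2 * k + 3)) := htail.summable
      have h2 : Summable fun j => -f (j + (2 * k + 3)) := this.neg
      apply h2.congr
      intro j; rw [hfb j]; ring
    have hkey : (0:ℝ) ≤ ∑' j, (-1:ℝ) ^ j * b j := by
      have hl := hbsum.hasSum.tendsto_sum_nat
      have := Antitone.alternating_series_le_tendsto hl hban 0
      simpa using this
    rw [tsum_congr hfb, tsum_neg]
    linarith
end

section
/- For every integer k ≥ 0 and every real x with |x| ≤ √((4k+5)(4k+6)), the Taylor polynomial T_{4k+2}(x) = ∑_{i=0}^{2k+1} (−1)^i x^{2i}/(2i)! satisfies T_{4k+2}(x) ≤ T_{4k+6}(x) ≤ cos x. -/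
theorem cos_taylor_lower (k : ℕ) (x : ℝ)
    (hx : |x| ≤ Real.sqrt ((4 * k + 5) * (4 * k + 6))) :
    (∑ i ∈ Finset.range (2 * k + 2), (-1 : ℝ) ^ i * x ^ (2 * i) / (Nat.factorial (2 * i))) ≤
      (∑ i ∈ Finset.range (2 * k + 4), (-1 : ℝ) ^ i * x ^ (2 * i) / (Nat.factorial (2 * i))) ∧
    (∑ i ∈ Finset.range (2 * k + 4), (-1 : ℝ) ^ i * x ^ (2 * i) / (Nat.factorial (2 * i))) ≤
      Real.cos x := by
  set f : ℕ → ℝ := fun n => (-1 : ℝ) ^ n * x ^ (2 * n) / (Nat.factorial (2 * n)) with hf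
  have hsum : Summable f := (Real.hasSum_cos x).summable
  -- x^2 bound
  have hprodnn : (0 : ℝ) ≤ ((4 * k + 5) * (4 * k + 6) : ℝ) := by positivity
  have hx2 : x ^ 2 ≤ ((4 * k + 5) * (4 * k + 6) : ℝ) := by
    have := Real.sq_sqrt hprodnn
    calc x ^ 2 = |x| ^ 2 := (sq_abs x).symm
    _ ≤ Real.sqrt ((4 * k + 5) * (4 * k + 6)) ^ 2 := by
        apply pow_le_pow_left₀ (abs_nonneg x) hx
    _ = _ := this
  -- pair estimate
  have hpair : ∀ n : ℕ, k + 1 ≤ n → 0 ≤ f (2 * n) + f (2 * n + 1) := by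
    intro n hn
    have h1 : f (2 * n) = x ^ (4 * n) / (Nat.factorial (4 * n)) := by
      simp [hf, pow_mul, ← two_mul]
      ring_nf
    have h2 : f (2 * n + 1) = -(x ^ (4 * n + 2) / (Nat.factorial (4 * n + 2))) := by
      simp [hf, pow_succ, pow_mul]
      ring_nf
    rw [h1, h2]
    have hfac1 : (0 : ℝ) < Nat.factorial (4 * n) := by positivity
    have hfac2 : (0 : ℝ) < Nat.factorial (4 * n + 2) := by positivity
    have hfe : (Nat.factorial (4 * n + 2) : ℝ) =
        ((4 * n + 2 : ℕ) : ℝ) * ((4 * n + 1 : ℕ) : ℝ) * (Nat.factorial (4 * n)) := by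
      rw [show 4 * n + 2 = (4 * n + 1) + 1 from rfl, Nat.factorial_succ, Nat.factorial_succ]
      push_cast; ring
    have hxm : (0 : ℝ) ≤ x ^ (4 * n) := by
      have : x ^ (4 * n) = (x ^ (2 * n)) ^ 2 := by rw [← pow_mul]; ring_nf
      rw [this]; positivity
    have hxm2 : x ^ (4 * n + 2) = x ^ (4 * n) * x ^ 2 := by ring
    have hle : x ^ 2 ≤ ((4 * n + 1 : ℕ) : ℝ) * ((4 * n + 2 : ℕ) : ℝ) := by
      have h45 : ((4 * k + 5 : ℕ) : ℝ) ≤ ((4 * n + 1 : ℕ) : ℝ) := Nat.cast_le.2 (by omega)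
      have h46 : ((4 * k + 6 : ℕ) : ℝ) ≤ ((4 * n + 2 : ℕ) : ℝ) := Nat.cast_le.2 (by omega)
      calc x ^ 2 ≤ ((4 * k + 5) * (4 * k + 6) : ℝ) := hx2
      _ ≤ _ := by
          push_cast at h45 h46 ⊢
          nlinarith
    have key : x ^ (4 * n + 2) / (Nat.factorial (4 * n + 2)) ≤
        x ^ (4 * n) / (Nat.factorial (4 * n)) := by
      rw [div_le_div_iff₀ hfac2 hfac1, hfe, hxm2]
      nlinarith [mul_le_mul_of_nonneg_left hle hxm]
    linarith
  constructor
  · have hsum4 : ∑ i ∈ Finset.range (2 * k + 4), f i =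
        (∑ i ∈ Finset.range (2 * k + 2), f i) + (f (2 * k + 2) + f (2 * k + 3)) := by
      rw [Finset.sum_range_succ, Finset.sum_range_succ]; ring
    have := hpair (k + 1) le_rfl
    rw [show 2 * (k + 1) = 2 * k + 2 by ring, show 2 * k + 2 + 1 = 2 * k + 3 from rfl] at this
    simp only [hf] at this hsum4 ⊢
    linarith
  · have hcos := Real.cos_eq_tsum x
    have hsplit := Summable.sum_add_tsum_nat_add (2 * k + 4) hsum
    set g : ℕ → ℝ := fun i => f (i + (2 * k + 4)) with hg
    have hgsum : Summable g := (summable_nat_add_iff (2 * k + 4)).2 hsum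
    have hge : Summable (fun j => g (2 * j)) :=
      hgsum.comp_injective (fun a b h => by omega)
    have hgo : Summable (fun j => g (2 * j + 1)) :=
      hgsum.comp_injective (fun a b h => by omega)
    have heo : ∑' j, g (2 * j) + ∑' j, g (2 * j + 1) = ∑' i, g i :=
      tsum_even_add_odd hge hgo
    have hpairsum : ∀ j : ℕ, 0 ≤ g (2 * j) + g (2 * j + 1) := by
      intro j
      have e1 : 2 * j + (2 * k + 4) = 2 * (j + k + 2) := by ring
      have e2 : 2 * j + 1 + (2 * k + 4) = 2 * (j + k + 2) + 1 := by ring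
      simp only [hg, e1, e2]
      exact hpair (j + k + 2) (by omega)
    have htail : 0 ≤ ∑' i, g i := by
      rw [← heo, ← Summable.tsum_add hge hgo]
      exact tsum_nonneg hpairsum
    have : ∑ i ∈ Finset.range (2 * k + 4), f i + ∑' i, g i = ∑' i, f i := hsplit
    have hcos' : Real.cos x = ∑' i, f i := hcos
    simp only [hf] at this hcos' ⊢
    linarith
end

section
/- For every natural number n ≥ 1 and every x in (0, π/2), the degree-n Taylor polynomial of sin at 0 is nonnegative: T_n^{sin,0}(x) ≥ 0. -/
open Finset

lemma sin_iter (m : ℕ) : iteratedDeriv (2*m) Real.sin = (fun y => (-1:ℝ)^m * Real.sin y) ∧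
    iteratedDeriv (2*m+1) Real.sin = (fun y => (-1:ℝ)^m * Real.cos y) := by
  induction m with
  | zero =>
    constructor
    · simp [iteratedDeriv_zero]
    · simp [iteratedDeriv_one, Real.deriv_sin]
  | succ m ih =>
    obtain ⟨h1, h2⟩ := ih
    have hcos : deriv (fun y => (-1:ℝ)^m * Real.cos y) = fun y => (-1:ℝ)^(m+1) * Real.sin y := by
      funext y
      rw [deriv_const_mul _ (Real.differentiable_cos y)]
      simp [Real.deriv_cos]; ring
    have hsin : deriv (fun y => (-1:ℝ)^(m+1) * Real.sin y) = fun y => (-1:ℝ)^(m+1) * Real.cos y := by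
      funext y
      rw [deriv_const_mul _ (Real.differentiable_sin y)]
      simp [Real.deriv_sin]
    have e1 : 2*(m+1) = (2*m+1)+1 := by ring
    constructor
    · rw [e1, iteratedDeriv_succ, h2, hcos]
    · have e2 : 2*(m+1)+1 = (2*m+1)+1+1 := by ring
      rw [e2, iteratedDeriv_succ, iteratedDeriv_succ, h2, hcos, hsin]

lemma alt : ∀ (M : ℕ) (a : ℕ → ℝ), (∀ m, 0 ≤ a m) → (∀ m, a (m+1) ≤ a m) →
    0 ≤ ∑ m ∈ Finset.range M, (-1:ℝ)^m * a m
  | 0, a, h0, hd => by simp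
  | 1, a, h0, hd => by simpa using h0 0
  | (M+2), a, h0, hd => by
    have IH := alt M (fun m => a (m+2)) (fun m => h0 (m+2)) (fun m => hd (m+2))
    rw [Finset.sum_range_succ', Finset.sum_range_succ']
    have : ∀ m, (-1:ℝ)^(m+1+1) * a (m+1+1) = (-1:ℝ)^m * a (m+2) := by
      intro m; ring_nf
    simp only [this]
    have h01 : 0 ≤ (-1:ℝ)^(0+1) * a (0+1) + (-1:ℝ)^0 * a 0 := by
      simp
      linarith [hd 0]
    linarith

theorem sin_taylor_nonneg (n : ℕ) (hn : 1 ≤ n) (x : ℝ) (hx : 0 < x)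
    (hx2 : x < Real.pi / 2) :
    0 ≤ ∑ k ∈ Finset.range (n + 1), iteratedDeriv k Real.sin 0 / (Nat.factorial k) * x ^ k := by
  set f : ℕ → ℝ := fun k => iteratedDeriv k Real.sin 0 / (Nat.factorial k) * x ^ k with hf
  have feven : ∀ m, f (2*m) = 0 := by
    intro m
    simp [hf, (sin_iter m).1]
  have fodd : ∀ m, f (2*m+1) = (-1:ℝ)^m * (x^(2*m+1) / (Nat.factorial (2*m+1))) := by
    intro m
    simp [hf, (sin_iter m).2]
    ring
  have hx2' : x ≤ 2 := by
    have := Real.pi_le_four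
    linarith
  set a : ℕ → ℝ := fun m => x^(2*m+1) / (Nat.factorial (2*m+1)) with ha
  have h0 : ∀ m, 0 ≤ a m := by
    intro m
    positivity
  have hd : ∀ m, a (m+1) ≤ a m := by
    intro m
    have e : 2*(m+1)+1 = (2*m+1)+1+1 := by ring
    rw [ha]
    simp only [e]
    have hF : (0:ℝ) < (Nat.factorial (2*m+1) : ℝ) := by positivity
    have hfac : ((Nat.factorial ((2*m+1)+1+1)) : ℝ)
        = (2*(m:ℝ)+3) * (2*(m:ℝ)+2) * (Nat.factorial (2*m+1)) := by
      rw [Nat.factorial_succ, Nat.factorial_succ]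
      push_cast
      ring
    rw [div_le_div_iff₀ (by positivity) hF, hfac]
    have hx4 : x^2 ≤ 4 := by nlinarith
    have hxp : 0 ≤ x^(2*m+1) := pow_nonneg hx.le _
    have hpow : x^((2*m+1)+1+1) = x^(2*m+1) * x^2 := by ring
    have h6 : (4:ℝ) ≤ (2*(m:ℝ)+3) * (2*(m:ℝ)+2) := by nlinarith [Nat.cast_nonneg (α := ℝ) m]
    rw [hpow]
    nlinarith [mul_nonneg hxp hF.le, mul_le_mul_of_nonneg_left hx4 (mul_nonneg hxp hF.le),
      mul_le_mul_of_nonneg_left h6 (mul_nonneg hxp hF.le)]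
  -- reindex
  have key : ∀ N : ℕ, ∑ k ∈ Finset.range (N+1), f k = ∑ m ∈ Finset.range ((N+1)/2), (-1:ℝ)^m * a m := by
    intro N
    induction N with
    | zero => simpa using feven 0
    | succ n ihn =>
      rw [Finset.sum_range_succ, ihn]
      rcases Nat.even_or_odd (n+1) with ⟨m, hm⟩ | ⟨m, hm⟩
      · have hm' : n+1 = 2*m := by omega
        have h1 : (n+1+1)/2 = (n+1)/2 := by omega
        rw [h1, hm', feven, add_zero]
      · have hm' : n+1 = 2*m+1 := by omega
        have h1 : (n+1+1)/2 = m+1 := by omega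
        have h2 : (n+1)/2 = m := by omega
        rw [h1, h2, Finset.sum_range_succ, hm', fodd]
  rw [show n + 1 = n + 1 from rfl]
  calc (0:ℝ) ≤ ∑ m ∈ Finset.range ((n+1)/2), (-1:ℝ)^m * a m := alt _ a h0 hd
    _ = ∑ k ∈ Finset.range (n+1), f k := (key n).symm
end

section
/- Let c_k ∈ (0, π/2) be the unique zero of the degree-(4k+2) Taylor polynomial of cos at 0 in (0, π/2). Then the sequence (c_k) is strictly increasing, c_0 = √2, and c_k → π/2 as k → ∞. -/
/-!
The partial sums of the cosine series with an even number of terms are strictly decreasing on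
`[0, 2]`, since their derivative is minus a partial sum of the sine series with an odd number of
terms, which dominates `sin x > 0` by the alternating series bound. So each has at most one zero
there. Since the terms `x ^ (2 * i) / (2 * i)!` decrease for `i ≥ 1`, adding the next two terms
raises the value at `c k` above `0`, which pushes the zero of the next partial sum to the right.
Finally, for `a < π / 2` the partial sums at `a` converge to `cos a > 0`, so `c k > a` eventually.
-/

open Finset Filter Real Nat

/-- The `n`-th partial sum of the cosine series: the Taylor polynomial of `cos` of degree
`2 * n - 2`. -/
noncomputable def cosPartialSum (n : ℕ) (x : ℝ) : ℝ :=
  ∑ i ∈ range n, (-1 : ℝ) ^ i * x ^ (2 * i) / (2 * i)!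

noncomputable def sinPartialSum (n : ℕ) (x : ℝ) : ℝ :=
  ∑ i ∈ range n, (-1 : ℝ) ^ i * x ^ (2 * i + 1) / (2 * i + 1)!

lemma pow_div_factorial_add_two_lt {x : ℝ} (hx : 0 < x) {n : ℕ}
    (h : x ^ 2 < (n + 1) * (n + 2)) : x ^ (n + 2) / (n + 2)! < x ^ n / n ! := by
  have hfac : ((n + 2)! : ℝ) = (n + 1) * (n + 2) * n ! := by
    push_cast [Nat.factorial_succ]; ring
  rw [hfac, div_lt_div_iff₀ (by positivity) (by positivity), pow_add]
  have : 0 < x ^ n * n ! := by positivity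
  nlinarith

lemma sinPartialSum_odd_pos {x : ℝ} (hx₀ : 0 < x) (hx₂ : x ≤ 2) (n : ℕ) :
    0 < sinPartialSum (2 * n + 1) x := by
  have hanti : Antitone fun i : ℕ ↦ x ^ (2 * i + 1) / (2 * i + 1)! := by
    refine antitone_nat_of_succ_le fun i ↦ (pow_div_factorial_add_two_lt hx₀ ?_).le
    push_cast
    nlinarith
  have hsin := (hasSum_sin x).tendsto_sum_nat
  simp_rw [mul_div_assoc] at hsin
  calc 0 < sin x := sin_pos_of_pos_of_le_two hx₀ hx₂
    _ ≤ _ := hanti.tendsto_le_alternating_series hsin n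
    _ = sinPartialSum (2 * n + 1) x := by simp only [sinPartialSum, mul_div_assoc]

lemma hasDerivAt_cosPartialSum (n : ℕ) (x : ℝ) :
    HasDerivAt (cosPartialSum (n + 1)) (-sinPartialSum n x) x := by
  have hterm (i : ℕ) : HasDerivAt (fun y ↦ (-1 : ℝ) ^ i * y ^ (2 * i) / (2 * i)!)
      ((-1) ^ i * ((2 * i : ℕ) * x ^ (2 * i - 1)) / (2 * i)!) x :=
    ((hasDerivAt_pow _ x).const_mul _).div_const _
  refine (HasDerivAt.fun_sum fun i (_ : i ∈ range (n + 1)) ↦ hterm i).congr_deriv ?_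
  rw [sum_range_succ', sinPartialSum, ← sum_neg_distrib]
  simp only [mul_zero, Nat.cast_zero, zero_mul, zero_div, add_zero]
  refine sum_congr rfl fun i _ ↦ ?_
  rw [show 2 * (i + 1) - 1 = 2 * i + 1 by omega, show 2 * (i + 1) = 2 * i + 1 + 1 by ring,
    Nat.factorial_succ]
  push_cast
  field_simp
  ring

lemma cosPartialSum_strictAntiOn (n : ℕ) :
    StrictAntiOn (cosPartialSum (2 * n + 2)) (Set.Icc 0 2) := by
  refine strictAntiOn_of_deriv_neg (convex_Icc 0 2)
    (fun x _ ↦ (hasDerivAt_cosPartialSum _ x).continuousAt.continuousWithinAt) fun x hx ↦ ?_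
  rw [interior_Icc] at hx
  rw [(hasDerivAt_cosPartialSum _ x).deriv, neg_neg_iff_pos]
  exact sinPartialSum_odd_pos hx.1 hx.2.le n

lemma cosPartialSum_lt_add_two {x : ℝ} (hx₀ : 0 < x) (hx₂ : x ≤ 2) (n : ℕ) :
    cosPartialSum (2 * n + 2) x < cosPartialSum (2 * (n + 1) + 2) x := by
  have hnext := pow_div_factorial_add_two_lt hx₀ (n := 2 * (2 * n + 2)) (by push_cast; nlinarith)
  rw [show 2 * (2 * n + 2) + 2 = 2 * (2 * n + 2 + 1) by ring] at hnext
  have e₁ : (-1 : ℝ) ^ (2 * n + 2) = 1 := by simp [pow_succ, pow_mul]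
  have e₂ : (-1 : ℝ) ^ (2 * n + 2 + 1) = -1 := by simp [pow_succ, pow_mul]
  rw [cosPartialSum, cosPartialSum, show 2 * (n + 1) + 2 = 2 * n + 2 + 1 + 1 by ring,
    sum_range_succ _ (2 * n + 2 + 1), sum_range_succ _ (2 * n + 2), e₁, e₂, one_mul,
    neg_one_mul, neg_div]
  linarith

lemma cosPartialSum_two (x : ℝ) : cosPartialSum 2 x = 1 - x ^ 2 / 2 := by
  norm_num [cosPartialSum, sum_range_succ, sub_eq_add_neg, neg_div]

lemma eventually_cosPartialSum_pos {a : ℝ} (ha : 0 < cos a) :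
    ∀ᶠ k in atTop, 0 < cosPartialSum (2 * k + 2) a :=
  ((hasSum_cos a).tendsto_sum_nat.comp
    (tendsto_atTop_mono (fun k ↦ by dsimp; omega) tendsto_id)).eventually (eventually_gt_nhds ha)

theorem cos_taylor_zero_seq (c : ℕ → ℝ)
    (hc : ∀ k, c k ∈ Set.Ioo 0 (Real.pi / 2) ∧
      (∑ i ∈ Finset.range (2 * k + 2), (-1 : ℝ) ^ i * (c k) ^ (2 * i) / (Nat.factorial (2 * i))) = 0) :
    StrictMono c ∧ c 0 = Real.sqrt 2 ∧
      Filter.Tendsto c Filter.atTop (nhds (Real.pi / 2)) := by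
  have hpi : π / 2 ≤ 2 := by linarith [pi_le_four]
  have hmem (k : ℕ) : c k ∈ Set.Icc (0 : ℝ) 2 := ⟨(hc k).1.1.le, (hc k).1.2.le.trans hpi⟩
  have hzero (k : ℕ) : cosPartialSum (2 * k + 2) (c k) = 0 := (hc k).2
  have hlt {a : ℝ} {k : ℕ} (ha : a ∈ Set.Icc 0 2) (hpos : 0 < cosPartialSum (2 * k + 2) a) :
      a < c k :=
    ((cosPartialSum_strictAntiOn k).lt_iff_gt (hmem k) ha).1 (hzero k ▸ hpos)
  refine ⟨strictMono_nat_of_lt_succ fun k ↦ hlt (hmem k) ?_, ?_, ?_⟩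
  · simpa [hzero k] using cosPartialSum_lt_add_two (hc k).1.1 (hmem k).2 k
  · have hsq : c 0 ^ 2 = 2 := by linarith [cosPartialSum_two (c 0), hzero 0]
    rw [← hsq, sqrt_sq (hc 0).1.1.le]
  refine tendsto_order.2
    ⟨fun a ha ↦ ?_, fun b hb ↦ .of_forall fun k ↦ (hc k).1.2.trans hb⟩
  rcases le_or_gt a 0 with ha₀ | ha₀
  · exact .of_forall fun k ↦ ha₀.trans_lt (hc k).1.1
  have hcos : 0 < cos a := cos_pos_of_mem_Ioo ⟨by linarith [pi_pos], ha⟩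
  filter_upwards [eventually_cosPartialSum_pos hcos] with k hk
  exact hlt ⟨ha₀.le, ha.le.trans hpi⟩ hk
end

section
/- For every real x with 0 < x ≤ 1.552 (in particular on (0, δ] where δ ≈ 1.5514 is the unique zero of the [6/4] Padé approximant of cos^2 x in (0, π/2)), the inequality (1 − x^2/2! + x^4/4! − x^6/6! + x^8/8! − x^{10}/10!)^2 > (−59x^6 + 962x^4 − 3675x^2 + 4095)/(17x^4 + 420x^2 + 4095) holds. Equivalently, the polynomial Q(x) = 17x^{12} + 15x^8(15837 − 176x^2) + 8100x^4(64519 − 1687x^2) + 3200(50205015 − 4035906x^2) is positive on (0, 1.552]. -/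
theorem taylor_sq_gt_pade (x : ℝ) (hx : 0 < x) (hx2 : x ≤ 1.552) :
    (1 - x ^ 2 / (Nat.factorial 2) + x ^ 4 / (Nat.factorial 4) - x ^ 6 / (Nat.factorial 6) + x ^ 8 / (Nat.factorial 8) - x ^ 10 / (Nat.factorial 10)) ^ 2 >
      (-59 * x ^ 6 + 962 * x ^ 4 - 3675 * x ^ 2 + 4095) /
        (17 * x ^ 4 + 420 * x ^ 2 + 4095) := by
  have hden : (0:ℝ) < 17 * x ^ 4 + 420 * x ^ 2 + 4095 := by positivity
  rw [gt_iff_lt, div_lt_iff₀ hden]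
  have ht : x ^ 2 ≤ 2.409904 := by nlinarith
  have ht0 : (0:ℝ) < x ^ 2 := by positivity
  have hQ : (0:ℝ) < 17 * (x^2)^6 - 2640 * (x^2)^5 + 237555 * (x^2)^4
      - 13664700 * (x^2)^3 + 522603900 * (x^2)^2 - 12914899200 * (x^2)
      + 160656048000 := by nlinarith [pow_pos ht0 2, pow_pos ht0 3, pow_pos ht0 4, pow_pos ht0 5, pow_pos ht0 6, sq_nonneg (x^2), mul_pos ht0 ht0]
  have key : (0:ℝ) < (x^2)^3 * (17 * (x^2)^6 - 2640 * (x^2)^5 + 237555 * (x^2)^4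
      - 13664700 * (x^2)^3 + 522603900 * (x^2)^2 - 12914899200 * (x^2)
      + 160656048000) := mul_pos (pow_pos ht0 3) hQ
  have h2 : ((Nat.factorial 2 : ℝ)) = 2 := by norm_num [Nat.factorial]
  have h4 : ((Nat.factorial 4 : ℝ)) = 24 := by norm_num [Nat.factorial]
  have h6 : ((Nat.factorial 6 : ℝ)) = 720 := by norm_num [Nat.factorial]
  have h8 : ((Nat.factorial 8 : ℝ)) = 40320 := by norm_num [Nat.factorial]
  have h10 : ((Nat.factorial 10 : ℝ)) = 3628800 := by norm_num [Nat.factorial]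
  rw [h2, h4, h6, h8, h10]
  nlinarith [key]
end

section
/- For every x in (0, π/2), (1 − x^2/2! + x^4/4! − x^6/6! + x^8/8!)^2 < (163x^4 − 780x^2 + 945)/(13x^4 + 165x^2 + 945). Equivalently, the polynomial R(x) = x^8(1291 − 13x^2) + x^4(2004240 − 66913x^2) + 480(632604 − 74625x^2) is positive on (0, π/2). -/
theorem taylor_sq_lt_pade (x : ℝ) (hx : 0 < x) (hx2 : x < Real.pi / 2) :
    (1 - x ^ 2 / (Nat.factorial 2) + x ^ 4 / (Nat.factorial 4) - x ^ 6 / (Nat.factorial 6) + x ^ 8 / (Nat.factorial 8)) ^ 2 <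
      (163 * x ^ 4 - 780 * x ^ 2 + 945) / (13 * x ^ 4 + 165 * x ^ 2 + 945) := by
  have hD : (0:ℝ) < 13 * x ^ 4 + 165 * x ^ 2 + 945 := by positivity
  have hx' : x < 1.575 := lt_of_lt_of_le hx2 (by nlinarith [Real.pi_lt_d2])
  have hx2' : x ^ 2 < 2.480625 := by nlinarith
  rw [lt_div_iff₀ hD]
  simp only [Nat.factorial]
  push_cast
  nlinarith [pow_pos hx 2, pow_pos hx 4, pow_pos hx 6, pow_pos hx 8, pow_pos hx 10,
    sq_nonneg (x^2), mul_pos (pow_pos hx 8) (sub_pos.mpr hx2'),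
    mul_pos (pow_pos hx 4) (sub_pos.mpr hx2'), mul_pos (pow_pos hx 2) (sub_pos.mpr hx2')]
end

section
/- For every x in (0, π) and every real a with 1 < a < 3/2, cos^2(x/2) ≤ (sin x / x)^a ≤ sin x / x. -/
open Real

lemma mono_aux (f : ℝ → ℝ) (hf : Differentiable ℝ f)
    (hd : ∀ t, 0 ≤ t → 0 ≤ deriv f t) {u : ℝ} (hu : 0 ≤ u) : f 0 ≤ f u := by
  have := monotoneOn_of_deriv_nonneg (convex_Ici 0) hf.continuous.continuousOn
    hf.differentiableOn (fun t ht => hd t (le_of_lt (by simpa [interior_Ici] using ht)))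
  exact this (Set.self_mem_Ici) hu hu

lemma cos_ge_taylor {u : ℝ} (hu : 0 ≤ u) : 1 - u ^ 2 / 2 ≤ Real.cos u := by
  have h := mono_aux (fun t => Real.cos t - 1 + t ^ 2 / 2) (by fun_prop) ?_ hu
  · simp at h; linarith
  · intro t ht
    have hD : HasDerivAt (fun t : ℝ => Real.cos t - 1 + t ^ 2 / 2) (-Real.sin t + 2 * t ^ 1 / 2) t :=
      ((Real.hasDerivAt_cos t).sub_const 1).add ((hasDerivAt_pow 2 t).div_const 2)
    rw [hD.deriv]
    have := Real.sin_le ht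
    nlinarith
lemma sin_ge_taylor {u : ℝ} (hu : 0 ≤ u) : u - u ^ 3 / 6 ≤ Real.sin u := by
  have h := mono_aux (fun t => Real.sin t - t + t ^ 3 / 6) (by fun_prop) ?_ hu
  · simp at h; linarith
  · intro t ht
    have hD : HasDerivAt (fun t : ℝ => Real.sin t - t + t ^ 3 / 6)
        (Real.cos t - 1 + 3 * t ^ 2 / 6) t :=
      ((Real.hasDerivAt_sin t).sub (hasDerivAt_id t)).add ((hasDerivAt_pow 3 t).div_const 6)
    rw [hD.deriv]
    have := cos_ge_taylor ht
    nlinarith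
lemma cos_le_taylor {u : ℝ} (hu : 0 ≤ u) : Real.cos u ≤ 1 - u ^ 2 / 2 + u ^ 4 / 24 := by
  have h := mono_aux (fun t => 1 - t ^ 2 / 2 + t ^ 4 / 24 - Real.cos t) (by fun_prop) ?_ hu
  · simp at h; linarith
  · intro t ht
    have hD : HasDerivAt (fun t : ℝ => 1 - t ^ 2 / 2 + t ^ 4 / 24 - Real.cos t)
        (0 - 2 * t ^ 1 / 2 + 4 * t ^ 3 / 24 - (-Real.sin t)) t :=
      (((hasDerivAt_const t (1:ℝ)).sub ((hasDerivAt_pow 2 t).div_const 2)).add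
        ((hasDerivAt_pow 4 t).div_const 24)).sub (Real.hasDerivAt_cos t)
    rw [hD.deriv]
    have := sin_ge_taylor ht
    nlinarith

lemma core {u : ℝ} (hu : 0 < u) (hu2 : u < Real.pi / 2) :
    u ^ 3 * Real.cos u ≤ Real.sin u ^ 3 := by
  have h1 : u - u ^ 3 / 6 ≤ Real.sin u := sin_ge_taylor hu.le
  have h2 : Real.cos u ≤ 1 - u ^ 2 / 2 + u ^ 4 / 24 := cos_le_taylor hu.le
  have hu3 : u < 1.6 := lt_trans hu2 (by nlinarith [Real.pi_lt_d2])
  have hpos : 0 ≤ u - u ^ 3 / 6 := by nlinarith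
  have h3 : (u - u ^ 3 / 6) ^ 3 ≤ Real.sin u ^ 3 := pow_le_pow_left₀ hpos h1 3
  have hq : u ^ 3 * (1 - u ^ 2 / 2 + u ^ 4 / 24) ≤ (u - u ^ 3 / 6) ^ 3 := by
    nlinarith [mul_pos (pow_pos hu 7) (show (0:ℝ) < 9 - u ^ 2 by nlinarith)]
  calc u ^ 3 * Real.cos u ≤ u ^ 3 * (1 - u ^ 2 / 2 + u ^ 4 / 24) := by
        exact mul_le_mul_of_nonneg_left h2 (pow_pos hu 3).le
    _ ≤ (u - u ^ 3 / 6) ^ 3 := hq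
    _ ≤ Real.sin u ^ 3 := h3

theorem yang_refinement (x : ℝ) (hx : 0 < x) (hx2 : x < Real.pi) (a : ℝ)
    (ha : 1 < a) (ha2 : a < 3 / 2) :
    Real.cos (x / 2) ^ 2 ≤ (Real.sin x / x) ^ a ∧
      (Real.sin x / x) ^ a ≤ Real.sin x / x := by
  set t := Real.sin x / x with htdef
  have hsin : 0 < Real.sin x := Real.sin_pos_of_pos_of_lt_pi hx hx2
  have ht0 : 0 < t := div_pos hsin hx
  have ht1 : t < 1 := (div_lt_one hx).2 (Real.sin_lt hx)
  set u := x / 2 with hudef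
  have hu : 0 < u := by positivity
  have hu2 : u < Real.pi / 2 := by rw [hudef]; linarith
  have hcosu : 0 < Real.cos u := Real.cos_pos_of_mem_Ioo ⟨by linarith [Real.pi_pos], hu2⟩
  have hsinu : 0 < Real.sin u := Real.sin_pos_of_pos_of_lt_pi hu (by linarith [Real.pi_pos])
  have hxeq : Real.sin x = 2 * Real.sin u * Real.cos u := by
    rw [hudef, ← Real.sin_two_mul]; ring_nf
  have hteq : t = Real.cos u * (Real.sin u / u) := by
    rw [htdef, hxeq, hudef]; field_simp
  -- key: cos u ^ 4 ≤ t ^ 3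
  have hcore := core hu hu2
  have hkey : (Real.cos u ^ 2) ^ 2 ≤ t ^ 3 := by
    rw [hteq]
    have h1 : Real.cos u ^ 3 * (u ^ 3 * Real.cos u) ≤ Real.cos u ^ 3 * Real.sin u ^ 3 :=
      mul_le_mul_of_nonneg_left hcore (by positivity)
    rw [mul_pow, div_pow, ← mul_div_assoc, le_div_iff₀ (by positivity)]
    nlinarith [pow_pos hcosu 3, pow_pos hu 3]
  have hmain : Real.cos u ^ 2 ≤ t ^ ((3:ℝ)/2) := by
    have h2 : Real.cos u ^ 2 = Real.sqrt ((Real.cos u ^ 2) ^ 2) :=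
      (Real.sqrt_sq (by positivity)).symm
    have h3 : t ^ ((3:ℝ)/2) = Real.sqrt (t ^ 3) := by
      rw [Real.sqrt_eq_rpow, ← Real.rpow_natCast t 3, ← Real.rpow_mul ht0.le]
      norm_num
    rw [h2, h3]
    exact Real.sqrt_le_sqrt hkey
  constructor
  · exact hmain.trans (Real.rpow_le_rpow_of_exponent_ge ht0 ht1.le ha2.le)
  · calc t ^ a ≤ t ^ (1:ℝ) := Real.rpow_le_rpow_of_exponent_ge ht0 ht1.le ha.le
      _ = t := Real.rpow_one t
end

section
/- For every t in (0, π/2) and every a in (1, 3/2), the function f(t) = 4t(a−1)cos^2 t − 2a sin t cos t − 2t(a−2) is strictly positive. -/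
/-!
With `s = 2t` the expression equals `s (1 + (a - 1) cos s) - a sin s`, which is affine and
decreasing in `a` because `s cos s < sin s`. Hence it exceeds its value at `a = 3/2`, namely
`(s (2 + cos s) - 3 sin s) / 2`, which is positive by the Cusa–Huygens inequality
`3 sin s < s (2 + cos s)` on `(0, π)`. In the chain `s cos s < sin s`, `s sin s < 2 - 2 cos s`,
Cusa–Huygens, each inequality says that a function vanishing at `0` is positive, and its
derivative is positive by the previous one.
-/

open Real Set

lemma pos_of_hasDerivAt_pos_of_map_zero {f f' : ℝ → ℝ} {b : ℝ}
    (hf : ∀ x, HasDerivAt f (f' x) x) (hf' : ∀ x ∈ Ioo 0 b, 0 < f' x) (h0 : f 0 = 0)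
    {x : ℝ} (hx : x ∈ Ioc 0 b) : 0 < f x := by
  have hmono : StrictMonoOn f (Icc 0 b) :=
    strictMonoOn_of_hasDerivWithinAt_pos (convex_Icc 0 b)
      (fun y _ ↦ (hf y).continuousAt.continuousWithinAt)
      (fun y _ ↦ (hf y).hasDerivWithinAt)
      (by rwa [interior_Icc])
  simpa [h0] using hmono (left_mem_Icc.2 (hx.1.le.trans hx.2)) (Ioc_subset_Icc_self hx) hx.1

namespace Real

lemma mul_cos_lt_sin {x : ℝ} (hx : x ∈ Ioo 0 π) : x * cos x < sin x := by
  have hderiv (y : ℝ) : HasDerivAt (fun y ↦ sin y - y * cos y) (y * sin y) y :=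
    ((hasDerivAt_sin y).sub ((hasDerivAt_id y).mul (hasDerivAt_cos y))).congr_deriv
      (by simp only [id]; ring)
  have := pos_of_hasDerivAt_pos_of_map_zero hderiv
    (fun y hy ↦ mul_pos hy.1 (sin_pos_of_pos_of_lt_pi hy.1 hy.2)) (by simp)
    (Ioo_subset_Ioc_self hx)
  linarith

lemma mul_sin_lt_two_sub_two_mul_cos {x : ℝ} (hx : x ∈ Ioo 0 π) :
    x * sin x < 2 - 2 * cos x := by
  have hderiv (y : ℝ) :
      HasDerivAt (fun y ↦ 2 - 2 * cos y - y * sin y) (sin y - y * cos y) y :=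
    ((((hasDerivAt_cos y).const_mul 2).const_sub 2).sub
      ((hasDerivAt_id y).mul (hasDerivAt_sin y))).congr_deriv (by simp only [id]; ring)
  have := pos_of_hasDerivAt_pos_of_map_zero hderiv
    (fun y hy ↦ sub_pos.2 (mul_cos_lt_sin hy)) (by simp) (Ioo_subset_Ioc_self hx)
  linarith

lemma three_mul_sin_lt_mul_two_add_cos {x : ℝ} (hx : x ∈ Ioo 0 π) :
    3 * sin x < x * (2 + cos x) := by
  have hderiv (y : ℝ) :
      HasDerivAt (fun y ↦ y * (2 + cos y) - 3 * sin y) (2 - 2 * cos y - y * sin y) y :=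
    (((hasDerivAt_id y).mul ((hasDerivAt_cos y).const_add 2)).sub
      ((hasDerivAt_sin y).const_mul 3)).congr_deriv (by simp only [id]; ring)
  have := pos_of_hasDerivAt_pos_of_map_zero hderiv
    (fun y hy ↦ sub_pos.2 (mul_sin_lt_two_sub_two_mul_cos hy)) (by simp)
    (Ioo_subset_Ioc_self hx)
  linarith

end Real

theorem f_pos_general (t : ℝ) (ht : 0 < t) (ht2 : t < Real.pi / 2) (a : ℝ)
    (ha2 : a < 3 / 2) :
    0 < 4 * t * (a - 1) * Real.cos t ^ 2 - 2 * a * Real.sin t * Real.cos t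
      - 2 * t * (a - 2) := by
  have hs : 2 * t ∈ Ioo 0 π := ⟨by linarith, by linarith⟩
  have hcusa := sub_pos.2 (three_mul_sin_lt_mul_two_add_cos hs)
  have hslope := mul_pos (sub_pos.2 ha2) (sub_pos.2 (mul_cos_lt_sin hs))
  have hsplit : 4 * t * (a - 1) * cos t ^ 2 - 2 * a * sin t * cos t - 2 * t * (a - 2)
      = (2 * t * (2 + cos (2 * t)) - 3 * sin (2 * t)) / 2
        + (3 / 2 - a) * (sin (2 * t) - 2 * t * cos (2 * t)) := by
    rw [sin_two_mul, cos_two_mul]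
    ring
  rw [hsplit]
  linarith

theorem f_pos (t : ℝ) (ht : 0 < t) (ht2 : t < Real.pi / 2) (a : ℝ)
    (ha : 1 < a) (ha2 : a < 3 / 2) :
    0 < 4 * t * (a - 1) * Real.cos t ^ 2 - 2 * a * Real.sin t * Real.cos t
      - 2 * t * (a - 2) :=
  f_pos_general t ht ht2 a ha2
end

section
/- For every t in (0, π/2) and every a in (1, 3/2), the polynomial TP(t) = 4t(1−a)(t − t^3/6 + t^5/120)^2 − 2a(t − t^3/6 + t^5/120)(1 − t^2/2 + t^4/24) + 2ta is strictly positive. -/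
theorem TP_pos (t : ℝ) (ht : 0 < t) (ht2 : t < Real.pi / 2) (a : ℝ)
    (ha : 1 < a) (ha2 : a < 3 / 2) :
    0 < 4 * t * (1 - a) * (t - t ^ 3 / 6 + t ^ 5 / 120) ^ 2
      - 2 * a * (t - t ^ 3 / 6 + t ^ 5 / 120) * (1 - t ^ 2 / 2 + t ^ 4 / 24)
      + 2 * t * a := by
  have hpi : t < 1.58 := by nlinarith [Real.pi_lt_d2]
  have hu : t ^ 2 < 2.4964 := by nlinarith
  have hP : 0 < t ^ 3 * (2 * t ^ 8 - 75 * t ^ 6 + 1120 * t ^ 4 - 7680 * t ^ 2 + 19200) := by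
    have h3 : 0 < t ^ 3 := by positivity
    have : 0 < 2 * t ^ 8 - 75 * t ^ 6 + 1120 * t ^ 4 - 7680 * t ^ 2 + 19200 := by
      nlinarith [sq_nonneg (t^2), sq_nonneg (t^4), sq_nonneg (t^2 - 2.4964), sq_nonneg (t^3), pow_pos ht 2]
    positivity
  have hf : 0 < t ^ 5 * (4 / 15 - t ^ 2 / 18 + 13 * t ^ 4 / 2880 - t ^ 6 / 7200) := by
    have h5 : 0 < t ^ 5 := by positivity
    have : 0 < 4 / 15 - t ^ 2 / 18 + 13 * t ^ 4 / 2880 - t ^ 6 / 7200 := by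
      nlinarith [sq_nonneg (t^2 - 2.4964), sq_nonneg t, pow_pos ht 2, sq_nonneg (t^2)]
    positivity
  nlinarith [mul_pos (by linarith : (0:ℝ) < 3 / 2 - a) hP, hf]
end
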